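/- arXiv:2405.16149 — 8 statements merged into one kernel-verified Lean document; each statement's English description precedes it below -/
import Mathlib

section
/- Every unsatisfiable CNF formula in which every clause has exactly k literals and which contains a variable occurring p times positively and q times negatively has at least 2^k + |q - p| clauses. -/
abbrev Lit := ℕ × Bool

def Lit.neg (l : Lit) : Lit := (l.1, !l.2)

abbrev Clause := Finset Lit

def Clause.nontaut (C : Clause) : Prop := ∀ l ∈ C, Lit.neg l ∉ C

instance (C : Clause) : Decidable (Clause.nontaut C) := by
  unfold Clause.nontaut; infer_instance

abbrev CNF := Finset Clause

def satClause (τ : ℕ → Bool) (C : Clause) : Prop := ∃ l ∈ C, τ l.1 = l.2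

def satCNF (τ : ℕ → Bool) (F : CNF) : Prop := ∀ C ∈ F, satClause τ C

def Satisfiable (F : CNF) : Prop := ∃ τ, satCNF τ F

def occ (F : CNF) (v : ℕ) : CNF := F.filter (fun C => (v, true) ∈ C ∨ (v, false) ∈ C)

def vdeg (F : CNF) (v : ℕ) : ℕ := (occ F v).card

def ldeg (F : CNF) (l : Lit) : ℕ := (F.filter (fun C => l ∈ C)).card

def vars (F : CNF) : Finset ℕ := F.sup (fun C => C.image Prod.fst)

def isKCNF (k : ℕ) (F : CNF) : Prop := ∀ C ∈ F, Clause.nontaut C ∧ C.card = k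

def KS (k s : ℕ) (F : CNF) : Prop := isKCNF k F ∧ ∀ v, vdeg F v ≤ s

def KPQ (k p q : ℕ) (F : CNF) : Prop :=
  isKCNF k F ∧ ∀ v, ldeg F (v, true) ≤ p ∧ ldeg F (v, false) ≤ q

def MinUnsat (F : CNF) : Prop := ¬ Satisfiable F ∧ ∀ C ∈ F, Satisfiable (F.erase C)

/-!
Set a literal `l` of `x` to true. The resulting formula is still unsatisfiable; in it the
`ldeg F l.neg` clauses that contained `l.neg` have `k - 1` literals and the clauses without `x`
have `k`. A clause with `m` literals is falsified by a `2⁻ᵐ` fraction of all assignments, and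
each assignment falsifies some clause, so the weights `2⁻ᵐ` sum to at least `1`, which reads
`2 ^ k ≤ #F - ldeg F l + ldeg F l.neg`. Both choices of `l` together give the bound.
-/

open Finset

@[simp] lemma Lit.neg_neg (l : Lit) : l.neg.neg = l := by
  simp [Lit.neg]

lemma Clause.nontaut.injOn_fst {C : Clause} (h : C.nontaut) :
    Set.InjOn Prod.fst (C : Set Lit) := by
  rintro ⟨v, s⟩ hs ⟨w, t⟩ ht (rfl : v = w)
  by_contra hst
  obtain rfl : t = !s := by cases s <;> cases t <;> simp_all
  exact h (v, s) hs ht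

lemma Clause.nontaut.mono {C D : Clause} (h : D.nontaut) (hCD : C ⊆ D) : C.nontaut :=
  fun l hl hnl => h l (hCD hl) (hCD hnl)

lemma powerset_filter_inter_eq {α : Type*} [DecidableEq α] {W A B : Finset α} (hA : A ⊆ W)
    (hB : B ⊆ A) :
    {σ ∈ W.powerset | σ ∩ A = B} = (W \ A).powerset.image (· ∪ B) := by
  ext σ
  simp only [mem_filter, mem_powerset, mem_image]
  constructor
  · rintro ⟨hσW, hσA⟩
    refine ⟨σ \ A, sdiff_subset_sdiff hσW le_rfl, ?_⟩
    rw [← hσA, sdiff_union_inter]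
  · rintro ⟨t, htW, rfl⟩
    refine ⟨union_subset (htW.trans sdiff_subset) (hB.trans hA), ?_⟩
    rw [union_inter_distrib_right, inter_eq_left.mpr hB,
      disjoint_iff_inter_eq_empty.mp (disjoint_of_subset_left htW sdiff_disjoint), empty_union]

lemma card_powerset_filter_inter_eq {α : Type*} [DecidableEq α] {W A B : Finset α} (hA : A ⊆ W)
    (hB : B ⊆ A) :
    #{σ ∈ W.powerset | σ ∩ A = B} = 2 ^ (#W - #A) := by
  have hinj : Set.InjOn (· ∪ B) ((W \ A).powerset : Set (Finset α)) := by
    intro s hs t ht hst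
    have disj : ∀ u ∈ (W \ A).powerset, Disjoint u B := fun u hu =>
      disjoint_of_subset_left (mem_powerset.mp hu) (disjoint_of_subset_right hB sdiff_disjoint)
    simpa [union_sdiff_cancel_right (disj s hs), union_sdiff_cancel_right (disj t ht)]
      using congrArg (· \ B) hst
  rw [powerset_filter_inter_eq hA hB, card_image_of_injOn hinj, card_powerset,
    card_sdiff_of_subset hA]

instance (τ : ℕ → Bool) (C : Clause) : Decidable (satClause τ C) := by
  unfold satClause; infer_instance

def toAssignment (σ : Finset ℕ) : ℕ → Bool := fun v => decide (v ∈ σ)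

lemma not_satClause_toAssignment_iff {C : Clause} (hC : C.nontaut) (σ : Finset ℕ) :
    ¬ satClause (toAssignment σ) C ↔
      σ ∩ C.image Prod.fst = {l ∈ C | l.2 = false}.image Prod.fst := by
  simp only [satClause, toAssignment, not_exists, not_and, Finset.ext_iff, mem_inter, mem_image,
    mem_filter]
  constructor
  · intro h v
    constructor
    · rintro ⟨hv, l, hl, rfl⟩
      refine ⟨l, ⟨hl, ?_⟩, rfl⟩
      exact Bool.eq_false_iff.mpr fun h2 => h l hl (by simp [hv, h2])
    · rintro ⟨l, ⟨hl, hl2⟩, rfl⟩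
      exact ⟨by simpa [hl2] using h l hl, l, hl, rfl⟩
  · intro h l hl
    cases hl2 : l.2
    · simpa using ((h l.1).mpr ⟨l, ⟨hl, hl2⟩, rfl⟩).1
    · rintro hv
      obtain ⟨l', ⟨hl', hl'2⟩, hfst⟩ := (h l.1).mp ⟨by simpa using hv, l, hl, rfl⟩
      cases hC.injOn_fst hl' hl hfst
      simp_all

lemma card_powerset_filter_not_satClause {C : Clause} (hC : C.nontaut) {W : Finset ℕ}
    (hW : C.image Prod.fst ⊆ W) :
    #{σ ∈ W.powerset | ¬ satClause (toAssignment σ) C} = 2 ^ (#W - #C) := by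
  rw [filter_congr fun σ _ => not_satClause_toAssignment_iff hC σ,
    card_powerset_filter_inter_eq hW (image_subset_image (filter_subset _ C)),
    card_image_of_injOn hC.injOn_fst]

lemma one_le_sum_inv_two_pow_card_of_not_satisfiable {F : CNF} (hF : ∀ C ∈ F, C.nontaut)
    (hunsat : ¬ Satisfiable F) : 1 ≤ ∑ C ∈ F, (2⁻¹ : ℚ) ^ #C := by
  simp only [Satisfiable, satCNF, not_exists, not_forall, exists_prop] at hunsat
  have hvars : ∀ C ∈ F, C.image Prod.fst ⊆ vars F := fun C hC =>
    le_sup (f := fun C : Clause => C.image Prod.fst) hC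
  have hcard : ∀ C ∈ F, #C ≤ #(vars F) := fun C hC => by
    simpa [card_image_of_injOn (hF C hC).injOn_fst] using card_le_card (hvars C hC)
  have hcover : (vars F).powerset ⊆
      F.biUnion fun C => {σ ∈ (vars F).powerset | ¬ satClause (toAssignment σ) C} := by
    intro σ hσ
    obtain ⟨C, hC, hfalse⟩ := hunsat (toAssignment σ)
    exact mem_biUnion.mpr ⟨C, hC, mem_filter.mpr ⟨hσ, hfalse⟩⟩
  have hcount : 2 ^ #(vars F) ≤ ∑ C ∈ F, 2 ^ (#(vars F) - #C) :=
    calc 2 ^ #(vars F) = #(vars F).powerset := (card_powerset _).symm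
      _ ≤ _ := card_le_card hcover
      _ ≤ _ := card_biUnion_le
      _ = _ := sum_congr rfl fun C hC =>
        card_powerset_filter_not_satClause (hF C hC) (hvars C hC)
  have hcountℚ : (2 : ℚ) ^ #(vars F) * 1 ≤ 2 ^ #(vars F) * ∑ C ∈ F, (2⁻¹ : ℚ) ^ #C :=
    calc (2 : ℚ) ^ #(vars F) * 1 = ((2 ^ #(vars F) : ℕ) : ℚ) := by push_cast; ring
      _ ≤ ((∑ C ∈ F, 2 ^ (#(vars F) - #C) : ℕ) : ℚ) := by exact_mod_cast hcount
      _ = _ := by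
        push_cast
        rw [mul_sum]
        exact sum_congr rfl fun C hC => by rw [pow_sub₀ _ two_ne_zero (hcard C hC), inv_pow]
  exact le_of_mul_le_mul_left hcountℚ (by positivity)

def CNF.assign (F : CNF) (l : Lit) : CNF := {C ∈ F | l ∉ C}.image (·.erase l.neg)

lemma Satisfiable.of_assign {F : CNF} {l : Lit} (h : Satisfiable (F.assign l)) :
    Satisfiable F := by
  obtain ⟨τ, hτ⟩ := h
  refine ⟨Function.update τ l.1 l.2, fun C hC => ?_⟩
  by_cases hl : l ∈ C
  · exact ⟨l, hl, by simp⟩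
  obtain ⟨m, hm, hτm⟩ := hτ _ (mem_image_of_mem _ (mem_filter.mpr ⟨hC, hl⟩))
  obtain ⟨hmneg, hmC⟩ := mem_erase.mp hm
  have hm1 : m.1 ≠ l.1 := by
    rintro h
    rcases m with ⟨v, s⟩
    rcases l with ⟨w, t⟩
    cases t <;> cases s <;> simp_all [Lit.neg]
  exact ⟨m, hmC, by rwa [Function.update_of_ne hm1]⟩

lemma isKCNF.assign_nontaut {k : ℕ} {F : CNF} (hF : isKCNF k F) (l : Lit) :
    ∀ C ∈ F.assign l, C.nontaut := by
  simp only [CNF.assign, mem_image, mem_filter]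
  rintro _ ⟨C, ⟨hC, -⟩, rfl⟩
  exact (hF C hC).1.mono (erase_subset _ _)

lemma isKCNF.sum_inv_two_pow_card_erase_neg {k : ℕ} {F : CNF} (hF : isKCNF k F) (l : Lit) :
    ∑ C ∈ F with l ∉ C, (2⁻¹ : ℚ) ^ #(C.erase l.neg) =
      (#{C ∈ F | l ∉ C} + ldeg F l.neg) * 2⁻¹ ^ k := by
  have hterm : ∀ C ∈ {C ∈ F | l ∉ C},
      (2⁻¹ : ℚ) ^ #(C.erase l.neg) = 2⁻¹ ^ k + if l.neg ∈ C then 2⁻¹ ^ k else 0 := by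
    intro C hC
    rw [← (hF C (mem_filter.mp hC).1).2]
    split_ifs with h
    · rw [← card_erase_add_one h, pow_succ]
      ring
    · rw [erase_eq_of_notMem h, add_zero]
  have hneg : {C ∈ {C ∈ F | l ∉ C} | l.neg ∈ C} = {C ∈ F | l.neg ∈ C} := by
    rw [filter_filter]
    refine filter_congr fun C hC => and_iff_right_of_imp fun h => by
      simpa using (hF C hC).1 l.neg h
  rw [sum_congr rfl hterm, sum_add_distrib, ← sum_filter, hneg, sum_const, sum_const, ldeg,
    nsmul_eq_mul, nsmul_eq_mul]
  ring

lemma isKCNF.two_pow_add_ldeg_le {k : ℕ} {F : CNF} (hF : isKCNF k F) (hunsat : ¬ Satisfiable F)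
    (l : Lit) : 2 ^ k + ldeg F l ≤ #F + ldeg F l.neg := by
  have hweight : 1 ≤ (#{C ∈ F | l ∉ C} + ldeg F l.neg) * (2⁻¹ : ℚ) ^ k :=
    calc (1 : ℚ) ≤ ∑ C ∈ F.assign l, 2⁻¹ ^ #C :=
          one_le_sum_inv_two_pow_card_of_not_satisfiable (hF.assign_nontaut l)
            (mt Satisfiable.of_assign hunsat)
      _ ≤ ∑ C ∈ F with l ∉ C, 2⁻¹ ^ #(C.erase l.neg) :=
          -- erasing `l.neg` may merge clauses
          sum_image_le_of_nonneg fun _ _ => by positivity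
      _ = _ := hF.sum_inv_two_pow_card_erase_neg l
  have hsplit : ldeg F l + #{C ∈ F | l ∉ C} = #F := card_filter_add_card_filter_not _
  rw [inv_pow, ← div_eq_mul_inv, one_le_div (by positivity)] at hweight
  have : 2 ^ k ≤ #{C ∈ F | l ∉ C} + ldeg F l.neg := by exact_mod_cast hweight
  omega

theorem stmt0 (k p q : ℕ) (F : CNF) (x : ℕ)
    (hF : isKCNF k F) (hunsat : ¬ Satisfiable F)
    (hp : ldeg F (x, true) = p) (hq : ldeg F (x, false) = q) :
    (2 : ℤ) ^ k + |(q : ℤ) - (p : ℤ)| ≤ (F.card : ℤ) := by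
  have hpos : 2 ^ k + p ≤ #F + q := hp ▸ hq ▸ hF.two_pow_add_ldeg_le hunsat (x, true)
  have hneg : 2 ^ k + q ≤ #F + p := hp ▸ hq ▸ hF.two_pow_add_ldeg_le hunsat (x, false)
  zify at hpos hneg
  rw [← le_sub_iff_add_le', abs_sub_le_iff]
  constructor <;> linarith
end

section
/- Every minimally unsatisfiable CNF formula has positive deficiency, i.e., strictly more clauses than variables. -/
/-!
Tarsi's lemma via Hall's theorem. Pick a proper subformula `S ⊂ F` of maximal deficiency; since
`δ(∅) = 0`, if `δ(F) ≤ 0` then `S` even has maximal deficiency among all subformulas of `F`.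
Maximality says that any `k` clauses of `F \ S` contain at least `k` variables outside `var(S)`,
so by Hall's theorem the clauses of `F \ S` have distinct representative variables outside
`var(S)`. Satisfy `S` by minimality of `F` and each clause of `F \ S` through its representative:
`F` is satisfiable.
-/

open Finset

def deficiency (F : CNF) : ℤ := F.card - (vars F).card

lemma vars_union (S T : CNF) : vars (S ∪ T) = vars S ∪ vars T := sup_union

lemma mem_vars {F : CNF} {C : Clause} (hC : C ∈ F) {l : Lit} (hl : l ∈ C) : l.1 ∈ vars F :=
  le_sup (f := fun C : Clause => C.image Prod.fst) hC (mem_image_of_mem _ hl)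

lemma vars_image_val_sdiff {R : CNF} (A : Finset R) (V : Finset ℕ) :
    vars (A.image Subtype.val) \ V = A.biUnion fun C => C.1.image Prod.fst \ V := by
  ext v
  simp only [vars, mem_sdiff, mem_sup, mem_biUnion, mem_image, Subtype.exists]
  grind

lemma card_le_card_vars_sdiff {S T : CNF} (hST : Disjoint S T)
    (h : deficiency (S ∪ T) ≤ deficiency S) : T.card ≤ (vars T \ vars S).card := by
  have hvars : (vars T \ vars S).card + (vars S).card = (vars (S ∪ T)).card := by
    rw [vars_union, union_comm]
    exact card_sdiff_add_card _ _
  unfold deficiency at h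
  rw [card_union_of_disjoint hST, ← hvars] at h
  push_cast at h
  omega

lemma exists_satCNF_of_injective_var {R : CNF} (f : R → ℕ) (hf : Function.Injective f)
    (hfC : ∀ C, f C ∈ C.1.image Prod.fst) (σ : ℕ → Bool) :
    ∃ τ, satCNF τ R ∧ ∀ v ∉ Set.range f, τ v = σ v := by
  classical
  choose lit hlitC hlitf using fun C => mem_image.mp (hfC C)
  refine ⟨fun v => if h : v ∈ Set.range f then (lit h.choose).2 else σ v, fun C hC => ?_,
    fun v hv => dif_neg hv⟩
  refine ⟨lit ⟨C, hC⟩, hlitC _, ?_⟩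
  have hv : (lit ⟨C, hC⟩).1 ∈ Set.range f := ⟨⟨C, hC⟩, (hlitf _).symm⟩
  have hchoose : hv.choose = ⟨C, hC⟩ := hf (hv.choose_spec.trans (hlitf _))
  simp only [dif_pos hv, hchoose]

theorem satisfiable_of_maximal_deficiency {F S : CNF} (hSF : S ⊆ F)
    (hmax : ∀ T ⊆ F, deficiency T ≤ deficiency S) (hS : Satisfiable S) : Satisfiable F := by
  classical
  set R := F \ S
  have hHall :
      ∀ A : Finset R, A.card ≤ (A.biUnion fun C => C.1.image Prod.fst \ vars S).card := by
    intro A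
    have hAR : A.image Subtype.val ⊆ R := fun _ hC => by
      obtain ⟨C, -, rfl⟩ := mem_image.mp hC
      exact C.2
    have hdisj : Disjoint S (A.image Subtype.val) := disjoint_sdiff.mono_right hAR
    have := card_le_card_vars_sdiff hdisj
      (hmax _ (union_subset hSF (hAR.trans sdiff_subset)))
    rwa [card_image_of_injective _ Subtype.val_injective, vars_image_val_sdiff] at this
  obtain ⟨f, hf, hfC⟩ := (all_card_le_biUnion_card_iff_exists_injective _).mp hHall
  obtain ⟨σ, hσ⟩ := hS
  obtain ⟨τ, hτR, hτσ⟩ :=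
    exists_satCNF_of_injective_var f hf (fun C => (mem_sdiff.mp (hfC C)).1) σ
  refine ⟨τ, fun C hC => ?_⟩
  by_cases hCS : C ∈ S
  · obtain ⟨l, hl, hσl⟩ := hσ C hCS
    refine ⟨l, hl, ?_⟩
    rw [hτσ, hσl]
    rintro ⟨D, hD⟩
    exact (mem_sdiff.mp (hfC D)).2 (hD ▸ mem_vars hCS hl)
  · exact hτR C (mem_sdiff.mpr ⟨hC, hCS⟩)

lemma exists_ssubset_maximal_deficiency {F : CNF} (hF : F.Nonempty) (hδ : deficiency F ≤ 0) :
    ∃ S ⊂ F, ∀ T ⊆ F, deficiency T ≤ deficiency S := by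
  have hne : F.ssubsets.Nonempty := ⟨∅, mem_ssubsets.mpr hF.empty_ssubset⟩
  obtain ⟨S, hS, hSmax⟩ := F.ssubsets.exists_max_image deficiency hne
  refine ⟨S, mem_ssubsets.mp hS, fun T hT => ?_⟩
  rcases hT.ssubset_or_eq with hT | rfl
  · exact hSmax T (mem_ssubsets.mpr hT)
  · calc deficiency T ≤ 0 := hδ
      _ = deficiency ∅ := by simp [deficiency, vars]
      _ ≤ deficiency S := hSmax ∅ (mem_ssubsets.mpr hF.empty_ssubset)

theorem stmt3_general (F : CNF) (h : MinUnsat F) :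
    (vars F).card < F.card := by
  by_contra! hcard
  have hδ : deficiency F ≤ 0 := by unfold deficiency; omega
  have hF : F.Nonempty := nonempty_iff_ne_empty.mpr fun hF =>
    h.1 ⟨fun _ => true, by simp [hF, satCNF]⟩
  obtain ⟨S, hSF, hmax⟩ := exists_ssubset_maximal_deficiency hF hδ
  obtain ⟨C, hCF, hCS⟩ := exists_of_ssubset hSF
  obtain ⟨τ, hτ⟩ := h.2 C hCF
  have hS : Satisfiable S :=
    ⟨τ, fun D hD => hτ D (mem_erase.mpr ⟨fun hDC => hCS (hDC ▸ hD), hSF.subset hD⟩)⟩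
  exact h.1 (satisfiable_of_maximal_deficiency hSF.subset hmax hS)

theorem stmt3 (F : CNF) (hnt : ∀ C ∈ F, Clause.nontaut C) (h : MinUnsat F) :
    (vars F).card < F.card :=
  stmt3_general F h
end

section
/- If a clause C is blocked in a CNF formula F and F is satisfiable, then F ∪ {C} is satisfiable. -/
def BlockedOn (F : CNF) (C : Clause) (x : Lit) : Prop :=
  x ∈ C ∧ ∀ C' ∈ F, Lit.neg x ∈ C' → ∃ y : Lit, y.1 ≠ x.1 ∧ y ∈ C ∧ Lit.neg y ∈ C'

def Blocked (F : CNF) (C : Clause) : Prop := ∃ x, BlockedOn F C x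

/-! If a model `τ` of `F` falsifies `C`, flip the blocking literal `x` to true. A clause of `F`
that loses its true literal `¬x` contains `¬y` for some `y ∈ C` with `var y ≠ var x`; since `τ`
falsifies `C`, `¬y` was true and is left untouched by the flip. -/

theorem Lit.neg_fst (l : Lit) : (Lit.neg l).1 = l.1 := rfl

theorem Lit.neg_sat_iff (τ : ℕ → Bool) (l : Lit) :
    τ (Lit.neg l).1 = (Lit.neg l).2 ↔ τ l.1 ≠ l.2 := by
  obtain ⟨v, b⟩ := l
  simp only [Lit.neg, ne_eq]
  cases τ v <;> cases b <;> decide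

theorem satCNF_insert {τ : ℕ → Bool} {C : Clause} {F : CNF} :
    satCNF τ (insert C F) ↔ satClause τ C ∧ satCNF τ F :=
  Finset.forall_mem_insert _ _ _

theorem satClause_update_of_blockedOn {F : CNF} {C D : Clause} {x : Lit} {τ : ℕ → Bool}
    (hx : BlockedOn F C x) (hCτ : ¬ satClause τ C) (hD : D ∈ F) (hDτ : satClause τ D) :
    satClause (Function.update τ x.1 x.2) D := by
  obtain ⟨hxC, hbl⟩ := hx
  have hfalse : ∀ l ∈ C, τ l.1 ≠ l.2 := fun l hl h => hCτ ⟨l, hl, h⟩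
  obtain ⟨l, hlD, hl⟩ := hDτ
  by_cases hlx : l.1 = x.1
  · have hl_neg : l = Lit.neg x :=
      Prod.ext hlx (by rw [← hl, hlx]; exact (Lit.neg_sat_iff τ x).mpr (hfalse x hxC))
    obtain ⟨y, hyx, hyC, hyD⟩ := hbl D hD (hl_neg ▸ hlD)
    refine ⟨Lit.neg y, hyD, ?_⟩
    rw [Lit.neg_fst, Function.update_of_ne hyx]
    exact (Lit.neg_sat_iff τ y).mpr (hfalse y hyC)
  · exact ⟨l, hlD, by rwa [Function.update_of_ne hlx]⟩

theorem stmt4 (F : CNF) (C : Clause) (hb : Blocked F C) (hsat : Satisfiable F) :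
    Satisfiable (insert C F) := by
  obtain ⟨x, hx⟩ := hb
  obtain ⟨τ, hτ⟩ := hsat
  by_cases hCτ : satClause τ C
  · exact ⟨τ, satCNF_insert.mpr ⟨hCτ, hτ⟩⟩
  · refine ⟨Function.update τ x.1 x.2, satCNF_insert.mpr ⟨⟨x, hx.1, by simp⟩, ?_⟩⟩
    exact fun D hD => satClause_update_of_blockedOn hx hCτ hD (hτ D hD)
end

section
/- For any CNF formula F and variable x, the formula DP_x(F), obtained by removing all clauses containing x or ¬x and adding all non-tautological resolvents on x, is logically equivalent to ∃x F; in particular, F is satisfiable if and only if DP_x(F) is satisfiable. -/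
def dpResolvent (x : ℕ) (C D : Clause) : Clause := (C ∪ D) \ {(x, true), (x, false)}

def DP (F : CNF) (x : ℕ) : CNF :=
  F.filter (fun C => (x, true) ∉ C ∧ (x, false) ∉ C) ∪
    ((F ×ˢ F).filter (fun p => (x, true) ∈ p.1 ∧ (x, false) ∈ p.2 ∧
        Clause.nontaut (dpResolvent x p.1 p.2))).image (fun p => dpResolvent x p.1 p.2)

/-!
If `τ[x := b]` satisfies `F`, then `τ` satisfies every resolvent of clauses `C ∋ x` and `D ∋ ¬x`:
for `b = false` the clause `C` is satisfied by a literal other than `x, ¬x` (it is not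
tautological), and symmetrically for `b = true`. Conversely, let `τ ⊨ DP_x(F)` with
`τ[x := true] ⊭ F`. A falsified clause `D` must contain `¬x` (otherwise `D ∈ DP_x(F)`), and all its
other literals are false under `τ`. Then `τ[x := false] ⊨ F`: a clause `C ∋ x` is resolved with
`D`, and whether the resolvent lies in `DP_x(F)` or is tautological, the true literal it provides
can only come from `C`.
-/

namespace Clause

def eraseVar (x : ℕ) (C : Clause) : Clause := C \ {(x, true), (x, false)}

theorem mem_eraseVar {x : ℕ} {C : Clause} {l : Lit} : l ∈ C.eraseVar x ↔ l ∈ C ∧ l.1 ≠ x := by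
  obtain ⟨v, b⟩ := l
  cases b <;> simp [eraseVar, and_comm, eq_comm]

theorem eraseVar_eq_self {x : ℕ} {C : Clause} (ht : (x, true) ∉ C) (hf : (x, false) ∉ C) :
    C.eraseVar x = C :=
  Finset.sdiff_eq_self_of_disjoint <| by simp [ht, hf]

theorem nontaut.mono_s6 {C D : Clause} (hCD : C ⊆ D) (hD : D.nontaut) : C.nontaut :=
  fun l hl hneg => hD l (hCD hl) (hCD hneg)

end Clause

theorem dpResolvent_eq_union_eraseVar (x : ℕ) (C D : Clause) :
    dpResolvent x C D = C.eraseVar x ∪ D.eraseVar x :=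
  Finset.union_sdiff_distrib _ _ _

theorem Lit.eq_neg_snd_iff (b : Bool) (l : Lit) : b = l.neg.2 ↔ b ≠ l.2 := by
  obtain ⟨v, c⟩ := l
  cases b <;> cases c <;> simp [Lit.neg]

section Semantics

variable {τ : ℕ → Bool} {C D : Clause}

theorem satClause_union : satClause τ (C ∪ D) ↔ satClause τ C ∨ satClause τ D := by
  simp only [satClause, Finset.mem_union, or_and_right, exists_or]

theorem satClause_update {x : ℕ} {b : Bool} :
    satClause (Function.update τ x b) C ↔ (x, b) ∈ C ∨ satClause τ (C.eraseVar x) := by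
  constructor
  · rintro ⟨l, hl, hτl⟩
    by_cases hlx : l.1 = x
    · obtain ⟨v, c⟩ := l
      simp only at hlx
      subst hlx
      simp only [Function.update_self] at hτl
      exact Or.inl (hτl ▸ hl)
    · exact Or.inr ⟨l, Clause.mem_eraseVar.2 ⟨hl, hlx⟩, by rwa [Function.update_of_ne hlx] at hτl⟩
  · rintro (hb | ⟨l, hl, hτl⟩)
    · exact ⟨(x, b), hb, Function.update_self _ _ _⟩
    · obtain ⟨hlC, hlx⟩ := Clause.mem_eraseVar.1 hl
      exact ⟨l, hlC, by rwa [Function.update_of_ne hlx]⟩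

/-- The complementary pair in `C ∪ D` is split between `C` and `D`; the half in `D` is false. -/
theorem satClause_of_not_nontaut_union (hC : C.nontaut) (hD : D.nontaut)
    (hCD : ¬ (C ∪ D).nontaut) (hτD : ¬ satClause τ D) : satClause τ C := by
  simp only [Clause.nontaut, not_forall, not_not, Finset.mem_union] at hCD
  obtain ⟨l, hl, hnl⟩ := hCD
  have hfalse : ∀ l ∈ D, τ l.1 ≠ l.2 := fun l hl h => hτD ⟨l, hl, h⟩
  rcases hl with hlC | hlD <;> rcases hnl with hnC | hnD
  · exact absurd hnC (hC l hlC)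
  · exact ⟨l, hlC, by simpa [Lit.neg, Lit.eq_neg_snd_iff] using hfalse _ hnD⟩
  · exact ⟨l.neg, hnC, (Lit.eq_neg_snd_iff _ _).2 (hfalse l hlD)⟩
  · exact absurd hnD (hD l hlD)

end Semantics

section DavisPutnam

variable {F : CNF} {x : ℕ} {τ : ℕ → Bool}

theorem mem_DP {E : Clause} :
    E ∈ DP F x ↔ (E ∈ F ∧ (x, true) ∉ E ∧ (x, false) ∉ E) ∨
      ∃ C ∈ F, ∃ D ∈ F, (x, true) ∈ C ∧ (x, false) ∈ D ∧ (dpResolvent x C D).nontaut ∧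
        dpResolvent x C D = E := by
  simp only [DP, Finset.mem_union, Finset.mem_filter, Finset.mem_image, Finset.mem_product,
    Prod.exists, and_assoc, exists_and_left]

theorem satCNF_DP_iff :
    satCNF τ (DP F x) ↔
      (∀ C ∈ F, (x, true) ∉ C → (x, false) ∉ C → satClause τ C) ∧
      ∀ C ∈ F, ∀ D ∈ F, (x, true) ∈ C → (x, false) ∈ D → (dpResolvent x C D).nontaut →
        satClause τ (C.eraseVar x) ∨ satClause τ (D.eraseVar x) := by
  simp only [satCNF, mem_DP, dpResolvent_eq_union_eraseVar, ← satClause_union]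
  constructor
  · intro h
    exact ⟨fun C hC ht hf => h C (Or.inl ⟨hC, ht, hf⟩),
      fun C hC D hD ht hf hR => h _ (Or.inr ⟨C, hC, D, hD, ht, hf, hR, rfl⟩)⟩
  · rintro ⟨hkeep, hres⟩ E (⟨hE, ht, hf⟩ | ⟨C, hC, D, hD, ht, hf, hR, rfl⟩)
    exacts [hkeep E hE ht hf, hres C hC D hD ht hf hR]

theorem satCNF_DP_of_satCNF_update (hnt : ∀ C ∈ F, C.nontaut) {b : Bool}
    (hb : satCNF (Function.update τ x b) F) : satCNF τ (DP F x) := by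
  refine satCNF_DP_iff.2 ⟨fun C hC ht hf => ?_, fun C hC D hD ht hf _ => ?_⟩
  · have := satClause_update.1 (hb C hC)
    rw [Clause.eraseVar_eq_self ht hf] at this
    exact this.resolve_left (by cases b <;> assumption)
  · cases b
    · exact Or.inl <| (satClause_update.1 (hb C hC)).resolve_left (hnt C hC _ ht)
    · exact Or.inr <| (satClause_update.1 (hb D hD)).resolve_left (hnt D hD _ hf)

theorem exists_satCNF_update_of_satCNF_DP (hnt : ∀ C ∈ F, C.nontaut)
    (h : satCNF τ (DP F x)) : ∃ b, satCNF (Function.update τ x b) F := by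
  obtain ⟨hkeep, hres⟩ := satCNF_DP_iff.1 h
  by_cases htrue : satCNF (Function.update τ x true) F
  · exact ⟨true, htrue⟩
  simp only [satCNF, not_forall, satClause_update, not_or] at htrue
  obtain ⟨D, hD, hDt, hD'⟩ := htrue
  have hDf : (x, false) ∈ D := by
    by_contra hDf
    exact hD' ((Clause.eraseVar_eq_self hDt hDf).symm ▸ hkeep D hD hDt hDf)
  refine ⟨false, fun C hC => satClause_update.2 ?_⟩
  by_cases hCf : (x, false) ∈ C
  · exact Or.inl hCf
  refine Or.inr ?_
  by_cases hCt : (x, true) ∈ C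
  · by_cases hR : (dpResolvent x C D).nontaut
    · exact (hres C hC D hD hCt hDf hR).resolve_right hD'
    · rw [dpResolvent_eq_union_eraseVar] at hR
      exact satClause_of_not_nontaut_union ((hnt C hC).mono_s6 Finset.sdiff_subset)
        ((hnt D hD).mono_s6 Finset.sdiff_subset) hR hD'
  · exact (Clause.eraseVar_eq_self hCt hCf).symm ▸ hkeep C hC hCt hCf

end DavisPutnam

theorem stmt6 (F : CNF) (x : ℕ) (hnt : ∀ C ∈ F, Clause.nontaut C) :
    (∀ τ : ℕ → Bool, satCNF τ (DP F x) ↔ ∃ b : Bool, satCNF (Function.update τ x b) F) ∧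
    (Satisfiable F ↔ Satisfiable (DP F x)) := by
  have hDP : ∀ τ : ℕ → Bool, satCNF τ (DP F x) ↔ ∃ b : Bool, satCNF (Function.update τ x b) F :=
    fun τ => ⟨exists_satCNF_update_of_satCNF_DP hnt,
      fun ⟨_, hb⟩ => satCNF_DP_of_satCNF_update hnt hb⟩
  refine ⟨hDP, ⟨fun ⟨τ, hτ⟩ => ⟨τ, (hDP τ).2 ⟨τ x, ?_⟩⟩, fun ⟨τ, hτ⟩ => ?_⟩⟩
  · rwa [Function.update_eq_self]
  · obtain ⟨b, hb⟩ := (hDP τ).1 hτ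
    exact ⟨_, hb⟩
end

section
/- In the lexicographically minimal adjacency matrix of a clause-literal graph of a CNF formula with n variables (with the 2n literal vertices preceding the clause vertices), the upper-left 2n×2n block is antidiagonal: for all i, j ≤ 2n, the (i,j)-entry is 1 if and only if i + j = 2n + 1. -/
def lexLt {N : ℕ} (A B : Fin N → Fin N → Bool) : Prop :=
  ∃ p : Fin N × Fin N,
    (∀ q : Fin N × Fin N, Prod.Lex (· < ·) (· < ·) q p → A q.1 q.2 = B q.1 q.2) ∧
    A p.1 p.2 = false ∧ B p.1 p.2 = true

/-!
Induct on the row index `i` of the literal block: every earlier row `q` has its single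
in-block one at the antidiagonal column `b - 1 - q`. By symmetry and uniqueness of partners,
this already forces the partner `j` of `i` to be `t = b - 1 - i` unless `i < j < t`. In that
case swapping `j` and `t` would leave all earlier rows unchanged, since they vanish on both
columns, and would turn the first one of row `i` into a zero, giving a lexicographically
smaller matrix.
-/

section Block

variable {N : ℕ}

def IsBlockMatching (b : ℕ) (A : Fin N → Fin N → Bool) : Prop :=
  ∀ i : Fin N, (i : ℕ) < b → ∃! j : Fin N, (j : ℕ) < b ∧ A i j = true

def IsBlockLexMin (b : ℕ) (A : Fin N → Fin N → Bool) : Prop :=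
  ∀ π : Equiv.Perm (Fin N), (∀ i, (π i : ℕ) < b ↔ (i : ℕ) < b) →
    ¬ lexLt (fun i j => A (π i) (π j)) A

def AntidiagonalBelow (b : ℕ) (A : Fin N → Fin N → Bool) (k : ℕ) : Prop :=
  ∀ q y : Fin N, (q : ℕ) < k → (y : ℕ) < b → A q y = true → (q : ℕ) + y + 1 = b

theorem swap_apply_lt_iff {b : ℕ} {j t : Fin N} (hj : (j : ℕ) < b) (ht : (t : ℕ) < b)
    (x : Fin N) : ((Equiv.swap j t x : Fin N) : ℕ) < b ↔ (x : ℕ) < b := by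
  rw [Equiv.swap_apply_def]
  split_ifs with hxj hxt
  · simp only [hxj, hj, ht]
  · simp only [hxt, hj, ht]
  · rfl

theorem lexLt_swap {A : Fin N → Fin N → Bool} {i j t : Fin N} (hij : i < j) (hjt : j < t)
    (hrows : ∀ q < i, A q j = A q t) (hj : A i j = true) (ht : A i t = false) :
    lexLt (fun x y => A (Equiv.swap j t x) (Equiv.swap j t y)) A := by
  have fix : ∀ x, x < j → Equiv.swap j t x = x := fun x hx =>
    Equiv.swap_apply_of_ne_of_ne hx.ne (hx.trans hjt).ne
  refine ⟨(i, j), fun q hq => ?_, by simpa [fix i hij] using ht, hj⟩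
  rcases Prod.lex_iff.mp hq with hq | ⟨rfl, hq⟩
  · simp only [fix q.1 (hq.trans hij)]
    rw [Equiv.swap_apply_def]
    split_ifs with h₁ h₂
    · rw [h₁, hrows q.1 hq]
    · rw [h₂, hrows q.1 hq]
    · rfl
  · simp only [fix q.1 hij, fix q.2 hq]

theorem IsBlockMatching.eq_of_adj {b : ℕ} {A : Fin N → Fin N → Bool}
    (hmatch : IsBlockMatching b A) {i j j' : Fin N} (hi : (i : ℕ) < b) (hj : (j : ℕ) < b)
    (hj' : (j' : ℕ) < b) (hAj : A i j = true) (hAj' : A i j' = true) : j = j' :=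
  (hmatch i hi).unique ⟨hj, hAj⟩ ⟨hj', hAj'⟩

theorem IsBlockMatching.adj_of_antidiagonalBelow {b k : ℕ} {A : Fin N → Fin N → Bool}
    (hmatch : IsBlockMatching b A) (hprev : AntidiagonalBelow b A k) {q t : Fin N}
    (hq : (q : ℕ) < k) (hqt : (q : ℕ) + t + 1 = b) : A q t = true := by
  obtain ⟨p, ⟨hp, hAp⟩, -⟩ := hmatch q (by omega)
  have hpt : p = t := Fin.ext (by have := hprev q p hq hp hAp; omega)
  rwa [← hpt]

end Block

section Antidiagonal

variable {b m : ℕ} {A : Fin (b + m) → Fin (b + m) → Bool}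

theorem add_add_one_eq_of_adj_of_mate_lt (hsymm : ∀ i j, A i j = A j i)
    (hmatch : IsBlockMatching b A) {k : ℕ} (hprev : AntidiagonalBelow b A k) {x y : Fin (b + m)}
    (hx : (x : ℕ) < b) (hy : (y : ℕ) < b) (hxy : A x y = true) (hmate : b - 1 - x < k) :
    (x : ℕ) + y + 1 = b := by
  let s : Fin (b + m) := ⟨b - 1 - x, by omega⟩
  have hAxs : A x s = true := by
    rw [hsymm]
    exact hmatch.adj_of_antidiagonalBelow hprev hmate (by simp only [s]; omega)
  have := congrArg Fin.val (hmatch.eq_of_adj hx hy (by simp only [s]; omega) hxy hAxs)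
  simp only [s] at this
  omega

theorem IsBlockLexMin.adj_eq_false_of_lt_of_add_lt (hmin : IsBlockLexMin b A)
    (hmatch : IsBlockMatching b A) {i j : Fin (b + m)} (hprev : AntidiagonalBelow b A i)
    (hij : i < j) (hji : (j : ℕ) + i + 1 < b) : A i j = false := by
  rw [Bool.eq_false_iff]
  intro hAij
  let t : Fin (b + m) := ⟨b - 1 - i, by omega⟩
  have hjt : j < t := Fin.lt_def.mpr (by simp only [t]; omega)
  have hjb : (j : ℕ) < b := by omega
  have htb : (t : ℕ) < b := by simp only [t]; omega
  have hrow_false : ∀ q < i, ∀ y : Fin (b + m), (y : ℕ) < b → y ≤ t → A q y = false := by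
    intro q hq y hy hyt
    rw [Bool.eq_false_iff]
    intro hAqy
    have := hprev q y hq hy hAqy
    simp only [Fin.le_def, t] at hyt
    omega
  have hAit : A i t = false := by
    rw [Bool.eq_false_iff]
    intro hAit
    exact hjt.ne (hmatch.eq_of_adj (by omega) hjb htb hAij hAit)
  refine hmin (Equiv.swap j t) (swap_apply_lt_iff hjb htb) (lexLt_swap hij hjt (fun q hq => ?_)
    hAij hAit)
  rw [hrow_false q hq j hjb hjt.le, hrow_false q hq t htb le_rfl]

theorem antidiagonalBelow_succ (hsymm : ∀ i j, A i j = A j i) (hirrefl : ∀ i, A i i = false)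
    (hmatch : IsBlockMatching b A) (hmin : IsBlockLexMin b A) {k : ℕ} (hk : k < b)
    (hprev : AntidiagonalBelow b A k) : AntidiagonalBelow b A (k + 1) := by
  intro i j hik hj hAij
  rcases Nat.lt_succ_iff_lt_or_eq.mp hik with hik | rfl
  · exact hprev i j hik hj hAij
  have hAji : A j i = true := by rwa [hsymm]
  by_cases hji : (j : ℕ) < i
  · have := hprev j i hji hk hAji
    omega
  by_cases hmate_j : b - 1 - j < (i : ℕ)
  · have := add_add_one_eq_of_adj_of_mate_lt hsymm hmatch hprev hj hk hAji hmate_j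
    omega
  by_cases hmate_i : b - 1 - i < (i : ℕ)
  · exact add_add_one_eq_of_adj_of_mate_lt hsymm hmatch hprev hk hj hAij hmate_i
  have hij : i < j := Fin.lt_def.mpr <| lt_of_le_of_ne (not_lt.mp hji) fun h => by
    rw [Fin.ext h, hirrefl] at hAij
    exact Bool.false_ne_true hAij
  by_contra hne
  rw [hmin.adj_eq_false_of_lt_of_add_lt hmatch hprev hij (by omega)] at hAij
  exact Bool.false_ne_true hAij

theorem antidiagonalBelow_of_le (hsymm : ∀ i j, A i j = A j i)
    (hirrefl : ∀ i, A i i = false) (hmatch : IsBlockMatching b A) (hmin : IsBlockLexMin b A) :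
    ∀ k ≤ b, AntidiagonalBelow b A k
  | 0, _ => fun _ _ hq => absurd hq (Nat.not_lt_zero _)
  | k + 1, hk => antidiagonalBelow_succ hsymm hirrefl hmatch hmin hk
      (antidiagonalBelow_of_le hsymm hirrefl hmatch hmin k (Nat.le_of_succ_le hk))

end Antidiagonal

theorem stmt8 (n m : ℕ) (A : Fin (2*n+m) → Fin (2*n+m) → Bool)
    (hsymm : ∀ i j, A i j = A j i) (hirrefl : ∀ i, A i i = false)
    (hmatch : ∀ i : Fin (2*n+m), (i : ℕ) < 2*n →
      ∃! j : Fin (2*n+m), (j : ℕ) < 2*n ∧ A i j = true)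
    (hmin : ∀ π : Equiv.Perm (Fin (2*n+m)),
      (∀ i, (π i : ℕ) < 2*n ↔ (i : ℕ) < 2*n) →
      ¬ lexLt (fun i j => A (π i) (π j)) A) :
    ∀ i j : Fin (2*n+m), (i : ℕ) < 2*n → (j : ℕ) < 2*n →
      (A i j = true ↔ (i : ℕ) + (j : ℕ) + 1 = 2*n) := by
  intro i j hi hj
  have hrows : AntidiagonalBelow (2*n) A (i + 1) :=
    antidiagonalBelow_of_le hsymm hirrefl hmatch hmin (i + 1) hi
  exact ⟨hrows i j i.val.lt_succ_self hj,
    IsBlockMatching.adj_of_antidiagonalBelow hmatch hrows i.val.lt_succ_self⟩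
end

section
/- Every unsatisfiable k-CNF formula in which each variable occurs at most once positively (a (k,1,q)-formula for some q) contains a clause all of whose literals occur exactly once in the formula. -/
/-! When no positive literal occurs twice, the literals of degree at least 2 are all negative,
so they can be made true simultaneously. Hence if every clause contained such a literal the
formula would be satisfiable. -/

lemma ldeg_pos_of_mem {F : CNF} {C : Clause} {l : Lit} (hC : C ∈ F) (hl : l ∈ C) :
    0 < ldeg F l :=
  Finset.card_pos.mpr ⟨C, Finset.mem_filter.mpr ⟨hC, hl⟩⟩

def heavyNegAssignment (F : CNF) (v : ℕ) : Bool := decide (ldeg F (v, false) < 2)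

lemma heavyNegAssignment_sat_of_two_le_ldeg {F : CNF} (hpos : ∀ v : ℕ, ldeg F (v, true) ≤ 1)
    {l : Lit} (hl : 2 ≤ ldeg F l) : heavyNegAssignment F l.1 = l.2 := by
  obtain ⟨v, b⟩ := l
  cases b
  · simp only [heavyNegAssignment, decide_eq_false_iff_not, not_lt]
    exact hl
  · exact absurd (hpos v) (by omega)

lemma satisfiable_of_forall_exists_two_le_ldeg {F : CNF} (hpos : ∀ v : ℕ, ldeg F (v, true) ≤ 1)
    (hheavy : ∀ C ∈ F, ∃ l ∈ C, 2 ≤ ldeg F l) : Satisfiable F :=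
  ⟨heavyNegAssignment F, fun C hC =>
    let ⟨l, hl, hdeg⟩ := hheavy C hC
    ⟨l, hl, heavyNegAssignment_sat_of_two_le_ldeg hpos hdeg⟩⟩

theorem stmt10_general (F : CNF) (hunsat : ¬ Satisfiable F)
    (hpos : ∀ v : ℕ, ldeg F (v, true) ≤ 1) :
    ∃ C ∈ F, ∀ l ∈ C, ldeg F l = 1 := by
  by_contra! hsingular
  refine hunsat (satisfiable_of_forall_exists_two_le_ldeg hpos fun C hC => ?_)
  obtain ⟨l, hl, hne⟩ := hsingular C hC
  have hl_occurs := ldeg_pos_of_mem hC hl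
  exact ⟨l, hl, by omega⟩

theorem stmt10 (k : ℕ) (F : CNF) (hF : isKCNF k F) (hunsat : ¬ Satisfiable F)
    (hpos : ∀ v : ℕ, ldeg F (v, true) ≤ 1) :
    ∃ C ∈ F, ∀ l ∈ C, ldeg F l = 1 :=
  stmt10_general F hunsat hpos
end

section
/- If F is an unsatisfiable (3,4)-formula, then there exists an unsatisfiable (3,4)-formula F' with |F'| ≤ |F| that contains at most one variable of degree 2. -/
/-!
Among the unsatisfiable (3,4)-formulas with at most `|F|` clauses, take one that is minimal
for the lexicographic order on (number of clauses, number of degree-2 variables). Suppose it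
had two degree-2 variables `x ≠ y`. If some literal over `x` or `y` is pure, deleting the
clauses containing it keeps the formula unsatisfiable and makes it smaller. Otherwise each of
the four literals over `x` and `y` occurs exactly once, so for one polarity `s` no clause
contains both `(y, c)` and `(x, c xor s)`. Substituting `x xor s` for `y` then keeps every clause
of size 3, leaves `x` with degree at most 4 and `y` with degree 0; either a clause is lost, or
all other degrees are unchanged and the number of degree-2 variables drops.
-/

open Finset

lemma Lit.eq_or_eq_neg_of_fst_eq {l l' : Lit} (h : l'.1 = l.1) : l' = l ∨ l' = l.neg := by
  obtain ⟨v, b⟩ := l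
  obtain ⟨v', b'⟩ := l'
  cases b <;> cases b' <;> simp_all [Lit.neg]

lemma satClause_of_not_nontaut (τ : ℕ → Bool) {C : Clause} (h : ¬ Clause.nontaut C) :
    satClause τ C := by
  simp only [Clause.nontaut, not_forall, not_not] at h
  obtain ⟨l, hl, hnl⟩ := h
  by_cases hτ : τ l.1 = l.2
  · exact ⟨l, hl, hτ⟩
  · exact ⟨l.neg, hnl, Bool.eq_not_iff.mpr hτ⟩

lemma mem_image_fst_iff {C : Clause} {v : ℕ} :
    v ∈ C.image Prod.fst ↔ (v, true) ∈ C ∨ (v, false) ∈ C := by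
  constructor
  · rintro h
    obtain ⟨⟨u, b⟩, hl, rfl⟩ := mem_image.mp h
    cases b <;> simp [hl]
  · rintro (h | h) <;> exact mem_image_of_mem Prod.fst h

lemma occ_eq_filter (F : CNF) (v : ℕ) :
    occ F v = F.filter (fun C => v ∈ C.image Prod.fst) := by
  simp only [occ, mem_image_fst_iff]

lemma vdeg_eq_card_filter (F : CNF) (v : ℕ) :
    vdeg F v = (F.filter fun C => v ∈ C.image Prod.fst).card := by
  rw [vdeg, occ_eq_filter]

lemma vdeg_mono {F G : CNF} (h : G ⊆ F) (v : ℕ) : vdeg G v ≤ vdeg F v :=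
  card_le_card (filter_subset_filter _ h)

lemma mem_vars_of_vdeg_pos {F : CNF} {v : ℕ} (h : 0 < vdeg F v) : v ∈ vars F := by
  obtain ⟨C, hC⟩ := card_pos.mp h
  rw [occ_eq_filter, mem_filter] at hC
  exact mem_sup.mpr ⟨C, hC⟩

lemma vdeg_eq_ldeg_add_ldeg_neg {F : CNF} (hF : ∀ C ∈ F, Clause.nontaut C) (l : Lit) :
    vdeg F l.1 = ldeg F l + ldeg F l.neg := by
  have hocc : occ F l.1 = F.filter (l ∈ ·) ∪ F.filter (l.neg ∈ ·) := by
    rw [← filter_or]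
    obtain ⟨v, b⟩ := l
    cases b <;> simp [occ, Lit.neg, or_comm]
  rw [vdeg, hocc, card_union_of_disjoint (disjoint_filter.mpr fun C hC hl => hF C hC l hl)]
  rfl

lemma eq_of_mem_of_ldeg_le_one {F : CNF} {l : Lit} (h : ldeg F l ≤ 1) {C₁ C₂ : Clause}
    (hC₁ : C₁ ∈ F) (h₁ : l ∈ C₁) (hC₂ : C₂ ∈ F) (h₂ : l ∈ C₂) : C₁ = C₂ :=
  card_le_one.mp h _ (mem_filter.mpr ⟨hC₁, h₁⟩) _ (mem_filter.mpr ⟨hC₂, h₂⟩)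

lemma vdeg_image_le (g : Clause → Clause) (F : CNF) (v : ℕ) :
    vdeg (F.image g) v ≤ (F.filter fun C => v ∈ (g C).image Prod.fst).card := by
  rw [vdeg_eq_card_filter, filter_image]
  exact card_image_le

lemma vdeg_image_of_injOn {g : Clause → Clause} {F : CNF} (hg : Set.InjOn g F) (v : ℕ) :
    vdeg (F.image g) v = (F.filter fun C => v ∈ (g C).image Prod.fst).card := by
  rw [vdeg_eq_card_filter, filter_image]
  exact card_image_of_injOn (hg.mono (coe_subset.mpr (filter_subset _ _)))

lemma KS.mono {k d : ℕ} {F G : CNF} (hF : KS k d F) (h : G ⊆ F) : KS k d G :=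
  ⟨fun C hC => hF.1 C (h hC), fun v => (vdeg_mono h v).trans (hF.2 v)⟩

def degTwoVars (F : CNF) : Finset ℕ := (vars F).filter (vdeg F · = 2)

lemma mem_degTwoVars {F : CNF} {v : ℕ} : v ∈ degTwoVars F ↔ vdeg F v = 2 :=
  ⟨fun h => (mem_filter.mp h).2, fun h => mem_filter.mpr ⟨mem_vars_of_vdeg_pos (by omega), h⟩⟩

section PureLiteral

variable {F : CNF} {l : Lit}

lemma satisfiable_of_satisfiable_filter_notMem (hpure : ldeg F l.neg = 0)
    (h : Satisfiable (F.filter (l ∉ ·))) : Satisfiable F := by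
  obtain ⟨τ, hτ⟩ := h
  refine ⟨Function.update τ l.1 l.2, fun C hC => ?_⟩
  by_cases hl : l ∈ C
  · exact ⟨l, hl, by simp⟩
  obtain ⟨l', hl', hτl'⟩ := hτ C (mem_filter.mpr ⟨hC, hl⟩)
  have hnl : l.neg ∉ C := fun h => (card_pos.mpr ⟨C, mem_filter.mpr ⟨hC, h⟩⟩).ne' hpure
  have hne : l'.1 ≠ l.1 := fun h => by
    rcases Lit.eq_or_eq_neg_of_fst_eq h with rfl | rfl <;> contradiction
  exact ⟨l', hl', by rwa [Function.update_of_ne hne]⟩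

lemma exists_card_lt_of_pure {k d : ℕ} (hF : KS k d F) (hunsat : ¬ Satisfiable F)
    (hl : 0 < ldeg F l) (hpure : ldeg F l.neg = 0) :
    ∃ G : CNF, KS k d G ∧ ¬ Satisfiable G ∧ G.card < F.card := by
  refine ⟨F.filter (l ∉ ·), hF.mono (filter_subset _ _),
    fun h => hunsat (satisfiable_of_satisfiable_filter_notMem hpure h),
    card_lt_card (filter_ssubset.mpr ?_)⟩
  obtain ⟨C, hC⟩ := card_pos.mp hl
  exact ⟨C, (mem_filter.mp hC).1, not_not.mpr (mem_filter.mp hC).2⟩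

end PureLiteral

section Substitution

variable (x y : ℕ) (s : Bool)

def substLit (l : Lit) : Lit := if l.1 = y then (x, xor l.2 s) else l

def substClause (C : Clause) : Clause := C.image (substLit x y s)

def substCNF (F : CNF) : CNF := (F.image (substClause x y s)).filter Clause.nontaut

def SubstAdmissible (F : CNF) : Prop := ∀ C ∈ F, ∀ c : Bool, (y, c) ∈ C → (x, xor c s) ∉ C

variable {x y s}

lemma update_apply_fst_eq_iff_substLit (τ : ℕ → Bool) (l : Lit) :
    Function.update τ y (xor (τ x) s) l.1 = l.2 ↔
      τ (substLit x y s l).1 = (substLit x y s l).2 := by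
  unfold substLit
  split_ifs with h
  · rw [h, Function.update_self]
    cases τ x <;> cases l.2 <;> cases s <;> simp
  · rw [Function.update_of_ne h]

lemma satClause_substClause_iff (τ : ℕ → Bool) (C : Clause) :
    satClause τ (substClause x y s C) ↔ satClause (Function.update τ y (xor (τ x) s)) C := by
  simp only [satClause, substClause, exists_mem_image, update_apply_fst_eq_iff_substLit]

lemma Satisfiable.of_substCNF {F : CNF} (h : Satisfiable (substCNF x y s F)) : Satisfiable F := by
  obtain ⟨τ, hτ⟩ := h
  refine ⟨Function.update τ y (xor (τ x) s), fun C hC => (satClause_substClause_iff τ C).mp ?_⟩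
  by_cases hnt : Clause.nontaut (substClause x y s C)
  · exact hτ _ (mem_filter.mpr ⟨mem_image_of_mem _ hC, hnt⟩)
  · exact satClause_of_not_nontaut τ hnt

lemma mem_image_fst_substClause {C : Clause} {v : ℕ} :
    v ∈ (substClause x y s C).image Prod.fst ↔
      v ≠ y ∧ v ∈ C.image Prod.fst ∨ v = x ∧ y ∈ C.image Prod.fst := by
  simp only [substClause, image_image, mem_image, Function.comp_def, substLit]
  constructor
  · rintro ⟨l, hl, rfl⟩
    split_ifs with h
    · exact Or.inr ⟨rfl, l, hl, h⟩
    · exact Or.inl ⟨h, l, hl, rfl⟩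
  · rintro (⟨hv, l, hl, rfl⟩ | ⟨rfl, l, hl, h⟩)
    · exact ⟨l, hl, by simp [hv]⟩
    · exact ⟨l, hl, by simp [h]⟩

lemma injOn_substLit {C : Clause} (hC : ∀ c : Bool, (y, c) ∈ C → (x, xor c s) ∉ C) :
    Set.InjOn (substLit x y s) C := by
  rintro ⟨u₁, b₁⟩ h₁ ⟨u₂, b₂⟩ h₂ heq
  simp only [substLit] at heq
  split_ifs at heq with e₁ e₂ e₂
  · simp_all
  · subst e₁; exact absurd (heq ▸ h₂) (hC b₁ h₁)
  · subst e₂; exact absurd (heq ▸ h₁) (hC b₂ h₂)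
  · exact heq

lemma isKCNF_substCNF {k : ℕ} {F : CNF} (hF : isKCNF k F) (hadm : SubstAdmissible x y s F) :
    isKCNF k (substCNF x y s F) := by
  intro C' hC'
  obtain ⟨hC'F, hnt⟩ := mem_filter.mp hC'
  obtain ⟨C, hC, rfl⟩ := mem_image.mp hC'F
  exact ⟨hnt, (card_image_of_injOn (injOn_substLit (hadm C hC))).trans (hF C hC).2⟩

lemma card_substCNF_le (F : CNF) : (substCNF x y s F).card ≤ F.card :=
  (card_filter_le _ _).trans card_image_le

lemma vdeg_substCNF_le (F : CNF) (v : ℕ) :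
    vdeg (substCNF x y s F) v ≤
      (F.filter fun C => v ∈ (substClause x y s C).image Prod.fst).card :=
  (vdeg_mono (filter_subset _ _) v).trans (vdeg_image_le _ F v)

lemma KS.substCNF {k d : ℕ} {F : CNF} (hF : KS k d F) (hadm : SubstAdmissible x y s F)
    (hxy : x ≠ y) (hsum : vdeg F x + vdeg F y ≤ d) : KS k d (substCNF x y s F) := by
  refine ⟨isKCNF_substCNF hF.1 hadm, fun v => (vdeg_substCNF_le F v).trans ?_⟩
  simp only [mem_image_fst_substClause]
  by_cases hvy : v = y
  · simp [hvy, hxy.symm]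
  by_cases hvx : v = x
  · subst hvx
    simp only [hxy, ne_eq, not_false_eq_true, true_and, filter_or]
    exact (card_union_le _ _).trans (by simpa only [vdeg_eq_card_filter] using hsum)
  · simpa [hvx, hvy, vdeg_eq_card_filter] using hF.2 v

lemma card_degTwoVars_substCNF_lt {F : CNF} (hxy : x ≠ y) (hx : vdeg F x = 2)
    (hy : vdeg F y = 2) (hcard : (substCNF x y s F).card = F.card) :
    (degTwoVars (substCNF x y s F)).card < (degTwoVars F).card := by
  have hsub : substCNF x y s F ⊆ F.image (substClause x y s) := filter_subset _ _
  have himage : (F.image (substClause x y s)).card = F.card :=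
    le_antisymm card_image_le (hcard ▸ card_le_card hsub)
  have heq : substCNF x y s F = F.image (substClause x y s) :=
    eq_of_subset_of_card_le hsub (by rw [hcard, himage])
  have hvdeg : ∀ v, v ≠ x → v ≠ y → vdeg (substCNF x y s F) v = vdeg F v := by
    intro v hvx hvy
    rw [heq, vdeg_image_of_injOn (card_image_iff.mp himage), vdeg_eq_card_filter]
    simp only [mem_image_fst_substClause, hvx, hvy, ne_eq, not_false_eq_true, true_and,
      false_and, or_false]
  have hy' : vdeg (substCNF x y s F) y = 0 := by
    have := vdeg_substCNF_le (x := x) (y := y) (s := s) F y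
    simp only [mem_image_fst_substClause, hxy.symm, ne_eq, not_true_eq_false, false_and,
      or_false, filter_false, card_empty] at this
    omega
  -- `x` already had degree 2, so `y` is the only variable whose status changes.
  refine card_lt_card ⟨fun v hv => ?_, fun h => ?_⟩
  · rw [mem_degTwoVars] at hv ⊢
    by_cases hvx : v = x
    · rwa [hvx]
    by_cases hvy : v = y
    · rw [hvy, hy'] at hv; omega
    · rwa [← hvdeg v hvx hvy]
  · have := mem_degTwoVars.mp (h (mem_degTwoVars.mpr hy))
    omega

end Substitution

lemma exists_substAdmissible {F : CNF} {x y : ℕ} (hF : ∀ C ∈ F, Clause.nontaut C)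
    (hx : ∀ b, ldeg F (x, b) ≤ 1) (hy : ∀ b, ldeg F (y, b) ≤ 1) :
    ∃ s, SubstAdmissible x y s F := by
  by_contra! h
  simp only [SubstAdmissible, not_forall, not_not, exists_prop] at h
  obtain ⟨C₁, hC₁, c₁, hy₁, hx₁⟩ := h true
  obtain ⟨C₂, hC₂, c₂, hy₂, hx₂⟩ := h false
  simp only [Bool.xor_true, Bool.xor_false] at hx₁ hx₂
  -- The two witnessing clauses share a literal over `y` or over `x`, so they coincide and are
  -- tautological.
  by_cases hc : c₂ = c₁
  · subst hc
    obtain rfl := eq_of_mem_of_ldeg_le_one (hy c₂) hC₁ hy₁ hC₂ hy₂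
    exact hF C₁ hC₁ _ hx₂ hx₁
  · obtain rfl : c₂ = !c₁ := Bool.eq_not_iff.mpr hc
    obtain rfl := eq_of_mem_of_ldeg_le_one (hx !c₁) hC₁ hx₁ hC₂ hx₂
    exact hF C₁ hC₁ _ hy₁ hy₂

lemma ldeg_le_one_of_vdeg_eq_two {F : CNF} (hF : ∀ C ∈ F, Clause.nontaut C) {l : Lit}
    (hl : vdeg F l.1 = 2) (hneg : ldeg F l.neg ≠ 0) : ldeg F l ≤ 1 := by
  have := vdeg_eq_ldeg_add_ldeg_neg hF l
  omega

lemma exists_lex_lt {k d : ℕ} {F : CNF} (hF : KS k d F) (hd : 4 ≤ d)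
    (hunsat : ¬ Satisfiable F) {x y : ℕ} (hx : vdeg F x = 2) (hy : vdeg F y = 2) (hxy : x ≠ y) :
    ∃ G : CNF, KS k d G ∧ ¬ Satisfiable G ∧ (G.card < F.card ∨
      G.card = F.card ∧ (degTwoVars G).card < (degTwoVars F).card) := by
  have hnt : ∀ C ∈ F, Clause.nontaut C := fun C hC => (hF.1 C hC).1
  by_cases hpure : ∃ l : Lit, (l.1 = x ∨ l.1 = y) ∧ ldeg F l.neg = 0
  · obtain ⟨l, hl, hpure⟩ := hpure
    have hpos : 0 < ldeg F l := by
      have := vdeg_eq_ldeg_add_ldeg_neg hnt l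
      rcases hl with h | h <;> rw [h] at this <;> omega
    obtain ⟨G, hG, hGunsat, hlt⟩ := exists_card_lt_of_pure hF hunsat hpos hpure
    exact ⟨G, hG, hGunsat, Or.inl hlt⟩
  push Not at hpure
  obtain ⟨s, hs⟩ := exists_substAdmissible hnt
    (fun b => ldeg_le_one_of_vdeg_eq_two hnt hx (hpure (x, b) (Or.inl rfl)))
    (fun b => ldeg_le_one_of_vdeg_eq_two hnt hy (hpure (y, b) (Or.inr rfl)))
  refine ⟨substCNF x y s F, hF.substCNF hs hxy (by omega),
    fun h => hunsat h.of_substCNF, ?_⟩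
  rcases (card_substCNF_le F).lt_or_eq with hlt | heq
  · exact Or.inl hlt
  · exact Or.inr ⟨heq, card_degTwoVars_substCNF_lt hxy hx hy heq⟩

theorem stmt12 (F : CNF) (hF : KS 3 4 F) (hunsat : ¬ Satisfiable F) :
    ∃ F' : CNF, KS 3 4 F' ∧ ¬ Satisfiable F' ∧ F'.card ≤ F.card ∧
      ∀ v w : ℕ, vdeg F' v = 2 → vdeg F' w = 2 → v = w := by
  have hwf : WellFounded (InvImage (Prod.Lex (· < ·) (· < ·))
      fun G : CNF => (G.card, (degTwoVars G).card)) :=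
    InvImage.wf _ (wellFounded_lt.prod_lex wellFounded_lt)
  obtain ⟨G, ⟨hG, hGunsat, hGF⟩, hmin⟩ :=
    hwf.has_min {G | KS 3 4 G ∧ ¬ Satisfiable G ∧ G.card ≤ F.card} ⟨F, hF, hunsat, le_rfl⟩
  refine ⟨G, hG, hGunsat, hGF, fun v w hv hw => ?_⟩
  by_contra hvw
  obtain ⟨G', hG', hG'unsat, hlt⟩ := exists_lex_lt hG le_rfl hGunsat hv hw hvw
  have hcard : G'.card ≤ G.card := by rcases hlt with h | ⟨h, -⟩ <;> omega
  exact hmin G' ⟨hG', hG'unsat, hcard.trans hGF⟩ (Prod.lex_def.mpr hlt)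
end

section
/- A minimum-size unsatisfiable (3,2,2)-formula has no variable of degree 3 and has an even number of clauses. -/
/-! Davis–Putnam elimination: in an unsatisfiable formula, the clauses containing a variable may be
replaced by any clauses entailing all resolvents on it without losing unsatisfiability. In a
minimum unsatisfiable (3,2,2)-formula a pure literal can be replaced by nothing, and the three
clauses `x ∨ A`, `x ∨ B`, `¬x ∨ E` of a degree-3 variable by at most two 3-clauses entailing
`A ∨ E` and `B ∨ E` that use no literal more often than the original three did. Both shrink the
formula within the class, so every variable has degree 0, 2 or 4, and double counting the `3m`
literal occurrences makes `m` even. -/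

namespace Lit

lemma neg_neg_s17 (l : Lit) : l.neg.neg = l := by
  obtain ⟨n, b⟩ := l; simp [Lit.neg]

lemma neg_fst_s17 (l : Lit) : l.neg.1 = l.1 := rfl

lemma eq_or_eq_neg_of_fst_eq_s17 {l m : Lit} (h : l.1 = m.1) : l = m ∨ l = m.neg := by
  obtain ⟨n, b⟩ := l; obtain ⟨n', b'⟩ := m
  cases b <;> cases b' <;> simp_all [Lit.neg]

end Lit

lemma satClause_mono {σ : ℕ → Bool} {C D : Clause} (h : C ⊆ D) (hC : satClause σ C) :
    satClause σ D :=
  let ⟨l, hl, hσ⟩ := hC; ⟨l, h hl, hσ⟩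

lemma satClause_of_not_nontaut_s17 {C : Clause} (hC : ¬ C.nontaut) (σ : ℕ → Bool) :
    satClause σ C := by
  simp only [Clause.nontaut, not_forall, not_not] at hC
  obtain ⟨l, hl, hnl⟩ := hC
  by_cases hσ : σ l.1 = l.2
  · exact ⟨l, hl, hσ⟩
  · exact ⟨l.neg, hnl, by simpa [Lit.neg, Bool.eq_not] using hσ⟩

lemma satClause_update_of_mem {σ : ℕ → Bool} {C : Clause} {y : Lit} (hy : y ∈ C) :
    satClause (Function.update σ y.1 y.2) C :=
  ⟨y, hy, by simp⟩

lemma satClause_update_of_erase_neg {σ : ℕ → Bool} {C : Clause} {y : Lit}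
    (h : satClause σ (C.erase y.neg)) : satClause (Function.update σ y.1 y.2) C := by
  obtain ⟨l, hl, hσ⟩ := h
  obtain ⟨hne, hlC⟩ := Finset.mem_erase.1 hl
  by_cases hv : l.1 = y.1
  · obtain rfl := (Lit.eq_or_eq_neg_of_fst_eq_s17 hv).resolve_right hne
    exact satClause_update_of_mem hlC
  · exact ⟨l, hlC, by rw [Function.update_of_ne hv, hσ]⟩

def Clause.resolvent (C D : Clause) (x : Lit) : Clause := C.erase x ∪ D.erase x.neg

lemma satClause_resolvent {σ : ℕ → Bool} {x : Lit} {C D : Clause} (hxC : x ∈ C)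
    (hxD : x.neg ∈ D) (hC : satClause σ C) (hD : satClause σ D) :
    satClause σ (C.resolvent D x) := by
  obtain ⟨l, hl, hσl⟩ := hC
  obtain ⟨m, hm, hσm⟩ := hD
  by_cases hlx : l = x
  · by_cases hmx : m = x.neg
    · subst hlx hmx
      exact ((Bool.eq_not_self _).1 (hσl.symm.trans hσm)).elim
    · exact ⟨m, Finset.mem_union_right _ (Finset.mem_erase.2 ⟨hmx, hm⟩), hσm⟩
  · exact ⟨l, Finset.mem_union_left _ (Finset.mem_erase.2 ⟨hlx, hl⟩), hσl⟩

lemma exists_update_satCNF {F : CNF} {x : Lit} {σ : ℕ → Bool}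
    (hres : ∀ C ∈ F, x ∈ C → ∀ D ∈ F, x.neg ∈ D → satClause σ (C.resolvent D x))
    (hrest : ∀ C ∈ F, x ∉ C → x.neg ∉ C → satClause σ C) :
    ∃ t, satCNF (Function.update σ x.1 t) F := by
  -- Make `x` true, unless some clause `D ∋ x.neg` has no other true literal: then the resolvents
  -- with `D` give every clause containing `x` another true literal, so make `x.neg` true instead.
  by_cases hneg : ∀ D ∈ F, x.neg ∈ D → satClause σ (D.erase x.neg)
  · refine ⟨x.2, fun C hC => ?_⟩
    by_cases hx : x ∈ C
    · exact satClause_update_of_mem hx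
    apply satClause_update_of_erase_neg
    by_cases hnx : x.neg ∈ C
    · exact hneg C hC hnx
    · rw [Finset.erase_eq_of_notMem hnx]
      exact hrest C hC hx hnx
  · push Not at hneg
    obtain ⟨D, hD, hnxD, hDσ⟩ := hneg
    refine ⟨x.neg.2, fun C hC => ?_⟩
    rw [← Lit.neg_fst_s17 x]
    by_cases hnx : x.neg ∈ C
    · exact satClause_update_of_mem hnx
    apply satClause_update_of_erase_neg
    rw [Lit.neg_neg_s17]
    by_cases hx : x ∈ C
    · obtain ⟨l, hl, hσl⟩ := hres C hC hx D hD hnxD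
      rcases Finset.mem_union.1 hl with hl | hl
      · exact ⟨l, hl, hσl⟩
      · exact absurd ⟨l, hl, hσl⟩ hDσ
    · rw [Finset.erase_eq_of_notMem hx]
      exact hrest C hC hx hnx

lemma mem_occ_iff {F : CNF} {C : Clause} {x : Lit} :
    C ∈ occ F x.1 ↔ C ∈ F ∧ (x ∈ C ∨ x.neg ∈ C) := by
  obtain ⟨v, b⟩ := x
  cases b <;> simp [occ, Lit.neg, or_comm]

lemma not_satisfiable_sdiff_occ_union {F N : CNF} {x : Lit} (hF : ¬ Satisfiable F)
    (hN : ∀ σ, satCNF σ N → ∀ C ∈ F, x ∈ C → ∀ D ∈ F, x.neg ∈ D →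
      satClause σ (C.resolvent D x)) :
    ¬ Satisfiable (F \ occ F x.1 ∪ N) := by
  rintro ⟨σ, hσ⟩
  have hrest : ∀ C ∈ F, x ∉ C → x.neg ∉ C → satClause σ C := fun C hC hx hnx =>
    hσ C (Finset.mem_union_left _ (Finset.mem_sdiff.2 ⟨hC, by simp [mem_occ_iff, hx, hnx]⟩))
  obtain ⟨t, ht⟩ := exists_update_satCNF
    (hN σ fun C hC => hσ C (Finset.mem_union_right _ hC)) hrest
  exact hF ⟨_, ht⟩

lemma ldeg_mono {N M : CNF} (h : N ⊆ M) (l : Lit) : ldeg N l ≤ ldeg M l :=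
  Finset.card_le_card (Finset.filter_subset_filter _ h)

lemma ldeg_union_le (N M : CNF) (l : Lit) : ldeg (N ∪ M) l ≤ ldeg N l + ldeg M l := by
  rw [ldeg, Finset.filter_union]
  exact Finset.card_union_le _ _

lemma ldeg_sdiff_add {F D : CNF} (h : D ⊆ F) (l : Lit) : ldeg (F \ D) l + ldeg D l = ldeg F l := by
  have hfilter : (F \ D).filter (l ∈ ·) = F.filter (l ∈ ·) \ D.filter (l ∈ ·) := by
    ext C; simp only [Finset.mem_filter, Finset.mem_sdiff]; tauto
  rw [ldeg, ldeg, ldeg, hfilter]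
  exact Finset.card_sdiff_add_card_eq_card (Finset.filter_subset_filter _ h)

lemma ldeg_insert_le (C : Clause) (N : CNF) (l : Lit) :
    ldeg (insert C N) l ≤ ldeg N l + if l ∈ C then 1 else 0 := by
  rw [ldeg, ldeg, Finset.filter_insert]
  split_ifs
  · exact Finset.card_insert_le _ _
  · exact Nat.le_add_right _ _

lemma ldeg_insert_of_notMem {C : Clause} {N : CNF} (hC : C ∉ N) (l : Lit) :
    ldeg (insert C N) l = ldeg N l + if l ∈ C then 1 else 0 := by
  rw [ldeg, ldeg, Finset.filter_insert]
  split_ifs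
  · exact Finset.card_insert_of_notMem (fun h => hC (Finset.mem_filter.1 h).1)
  · rfl

lemma ldeg_singleton (C : Clause) (l : Lit) : ldeg {C} l = if l ∈ C then 1 else 0 := by
  rw [ldeg, Finset.filter_singleton]
  split_ifs <;> rfl

lemma ldeg_eq_zero_iff {F : CNF} {l : Lit} : ldeg F l = 0 ↔ ∀ C ∈ F, l ∉ C := by
  simp [ldeg, Finset.filter_eq_empty_iff]

lemma isKCNF_mono {k : ℕ} {N M : CNF} (h : N ⊆ M) (hM : isKCNF k M) : isKCNF k N :=
  fun C hC => hM C (h hC)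

lemma KPQ_sdiff_union {k p q : ℕ} {F D N : CNF} (hF : KPQ k p q F) (hD : D ⊆ F)
    (hN : isKCNF k N) (hdeg : ∀ l, ldeg N l ≤ ldeg D l) : KPQ k p q (F \ D ∪ N) := by
  have key : ∀ l, ldeg (F \ D ∪ N) l ≤ ldeg F l := fun l => calc
    ldeg (F \ D ∪ N) l ≤ ldeg (F \ D) l + ldeg N l := ldeg_union_le _ _ l
    _ ≤ ldeg (F \ D) l + ldeg D l := Nat.add_le_add_left (hdeg l) _
    _ = ldeg F l := ldeg_sdiff_add hD l
  refine ⟨fun C hC => ?_, fun v => ⟨(key _).trans (hF.2 v).1, (key _).trans (hF.2 v).2⟩⟩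
  rcases Finset.mem_union.1 hC with hC | hC
  · exact hF.1 C (Finset.mem_sdiff.1 hC).1
  · exact hN C hC

lemma false_of_replace_occ {k p q : ℕ} {F N : CNF} {x : Lit} (hF : KPQ k p q F)
    (hunsat : ¬ Satisfiable F)
    (hmin : ∀ G : CNF, KPQ k p q G → ¬ Satisfiable G → F.card ≤ G.card)
    (hNk : isKCNF k N) (hNdeg : ∀ l, ldeg N l ≤ ldeg (occ F x.1) l)
    (hNcard : N.card < (occ F x.1).card)
    (hNres : ∀ σ, satCNF σ N → ∀ C ∈ F, x ∈ C → ∀ D ∈ F, x.neg ∈ D →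
      satClause σ (C.resolvent D x)) : False := by
  have hsub : occ F x.1 ⊆ F := Finset.filter_subset _ _
  have hG := hmin _ (KPQ_sdiff_union hF hsub hNk hNdeg)
    (not_satisfiable_sdiff_occ_union hunsat hNres)
  have := (Finset.card_union_le (F \ occ F x.1) N).trans_lt
    (Nat.add_lt_add_left hNcard _)
  rw [Finset.card_sdiff_add_card_eq_card hsub] at this
  omega

lemma ldeg_neg_ne_zero {k p q : ℕ} {F : CNF} (hF : KPQ k p q F) (hunsat : ¬ Satisfiable F)
    (hmin : ∀ G : CNF, KPQ k p q G → ¬ Satisfiable G → F.card ≤ G.card) {x : Lit}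
    (hx : ldeg F x ≠ 0) : ldeg F x.neg ≠ 0 := by
  intro hnx
  obtain ⟨C, hC, hxC⟩ : ∃ C ∈ F, x ∈ C := by simpa [ldeg_eq_zero_iff] using hx
  refine false_of_replace_occ hF hunsat hmin (N := ∅) (x := x) (by simp [isKCNF])
    (by simp [ldeg]) ?_ ?_
  · exact Finset.card_pos.2 ⟨C, mem_occ_iff.2 ⟨hC, Or.inl hxC⟩⟩
  · intro σ _ C _ _ D hD hxD
    exact absurd hxD (ldeg_eq_zero_iff.1 hnx D hD)

lemma Finset.exists_mem_ne_notMem_of_not_subset {α : Type*} {A B E : Finset α}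
    (hE : 1 < E.card) (hA : ¬ E ⊆ A) (hB : ¬ E ⊆ B) (hAB : ∀ l ∈ E, l ∈ A → l ∉ B) :
    ∃ e ∈ E, ∃ e' ∈ E, e ≠ e' ∧ e ∉ A ∧ e' ∉ B := by
  obtain ⟨e, heE, heA⟩ := Finset.not_subset.1 hA
  obtain ⟨e', he'E, he'B⟩ := Finset.not_subset.1 hB
  by_cases hee' : e = e'
  · subst hee'
    obtain ⟨g, hgE, hge⟩ := Finset.exists_mem_ne hE e
    by_cases hgA : g ∈ A
    · exact ⟨e, heE, g, hgE, hge.symm, heA, hAB g hgE hgA⟩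
    · exact ⟨g, hgE, e, heE, hge, hgA, he'B⟩
  · exact ⟨e, heE, e', he'E, hee', heA, he'B⟩

lemma satClause_resolvent_of_erase_eq {σ : ℕ → Bool} {x : Lit} {C D : Clause} (hxC : x ∈ C)
    (hxD : x.neg ∈ D) (hCD : D.erase x.neg = C.erase x) (hC : satClause σ C)
    (hD : satClause σ D) (C' : Clause) : satClause σ (C'.resolvent D x) := by
  have h := satClause_resolvent hxC hxD hC hD
  rw [Clause.resolvent, hCD, Finset.union_self, ← hCD] at h
  exact satClause_mono Finset.subset_union_right h

lemma ldeg_insert_insert_singleton {C₁ C₂ C₃ : Clause} (h12 : C₁ ≠ C₂) (h13 : C₁ ≠ C₃)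
    (h23 : C₂ ≠ C₃) (l : Lit) :
    ldeg {C₁, C₂, C₃} l =
      (if l ∈ C₁ then 1 else 0) + (if l ∈ C₂ then 1 else 0) + (if l ∈ C₃ then 1 else 0) := by
  rw [ldeg_insert_of_notMem (by simp [h12, h13]), ldeg_insert_of_notMem (by simp [h23]),
    ldeg_singleton]
  omega

lemma ldeg_insert_erase_pair_le {x : Lit} {C₁ C₂ C₃ : Clause} (h12 : C₁ ≠ C₂) (h13 : C₁ ≠ C₃)
    (h23 : C₂ ≠ C₃) {e e' : Lit} (he : e ∈ C₃) (he' : e' ∈ C₃) (hee' : e ≠ e') (l : Lit) :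
    ldeg {insert e (C₁.erase x), insert e' (C₂.erase x)} l ≤ ldeg {C₁, C₂, C₃} l := by
  refine (ldeg_insert_le _ _ l).trans ?_
  rw [ldeg_singleton, ldeg_insert_insert_singleton h12 h13 h23]
  simp only [Finset.mem_insert, Finset.mem_erase]
  split_ifs <;> simp_all

lemma exists_replacement_of_erase_subset {x : Lit} {C D : Clause} {M : CNF} (hK : isKCNF 3 M)
    (hC : C ∈ M) (hD : D ∈ M) (hxC : x ∈ C) (hxD : x.neg ∈ D)
    (hDC : D.erase x.neg ⊆ C.erase x) :
    ∃ N : CNF, N.card < 3 ∧ isKCNF 3 N ∧ (∀ l, ldeg N l ≤ ldeg M l) ∧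
      ∀ σ, satCNF σ N → ∀ C' : Clause, satClause σ (C'.resolvent D x) := by
  have hsub : ({C, D} : CNF) ⊆ M := Finset.insert_subset hC (Finset.singleton_subset_iff.2 hD)
  have heq : D.erase x.neg = C.erase x := Finset.eq_of_subset_of_card_le hDC <| by
    rw [Finset.card_erase_of_mem hxC, Finset.card_erase_of_mem hxD, (hK C hC).2, (hK D hD).2]
  exact ⟨{C, D}, Finset.card_le_two.trans_lt (by norm_num), isKCNF_mono hsub hK, ldeg_mono hsub,
    fun σ hσ => satClause_resolvent_of_erase_eq hxC hxD heq (hσ C (by simp)) (hσ D (by simp))⟩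

/-- For `C₁ = x ∨ A`, `C₂ = x ∨ B`, `C₃ = ¬x ∨ E`: if `E = A` take `C₁, C₃` (symmetrically for
`B`); otherwise take the non-tautological ones among `e ∨ A` and `e' ∨ B` for distinct `e ∉ A`,
`e' ∉ B` in `E`, which exist because no literal lies in all three clauses. -/
lemma exists_replacement {x : Lit} {C₁ C₂ C₃ : Clause} (hK : isKCNF 3 {C₁, C₂, C₃})
    (h12 : C₁ ≠ C₂) (h13 : C₁ ≠ C₃) (h23 : C₂ ≠ C₃)
    (hx₁ : x ∈ C₁) (hx₂ : x ∈ C₂) (hx₃ : x.neg ∈ C₃) (hcap : ∀ l, ldeg {C₁, C₂, C₃} l ≤ 2) :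
    ∃ N : CNF, N.card < 3 ∧ isKCNF 3 N ∧ (∀ l, ldeg N l ≤ ldeg {C₁, C₂, C₃} l) ∧
      ∀ σ, satCNF σ N → satClause σ (C₁.resolvent C₃ x) ∧ satClause σ (C₂.resolvent C₃ x) := by
  by_cases hEA : C₃.erase x.neg ⊆ C₁.erase x
  · obtain ⟨N, hN⟩ := exists_replacement_of_erase_subset hK (by simp) (by simp) hx₁ hx₃ hEA
    exact ⟨N, hN.1, hN.2.1, hN.2.2.1, fun σ hσ => ⟨hN.2.2.2 σ hσ C₁, hN.2.2.2 σ hσ C₂⟩⟩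
  by_cases hEB : C₃.erase x.neg ⊆ C₂.erase x
  · obtain ⟨N, hN⟩ := exists_replacement_of_erase_subset hK (by simp) (by simp) hx₂ hx₃ hEB
    exact ⟨N, hN.1, hN.2.1, hN.2.2.1, fun σ hσ => ⟨hN.2.2.2 σ hσ C₁, hN.2.2.2 σ hσ C₂⟩⟩
  have hcard2 : ∀ {C l}, C ∈ ({C₁, C₂, C₃} : CNF) → l ∈ C → (C.erase l).card = 2 :=
    fun hC hl => by rw [Finset.card_erase_of_mem hl, (hK _ hC).2]
  have hAB : ∀ l ∈ C₃.erase x.neg, l ∈ C₁.erase x → l ∉ C₂.erase x := by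
    intro l h₃ h₁ h₂
    have := hcap l
    rw [ldeg_insert_insert_singleton h12 h13 h23, if_pos (Finset.mem_of_mem_erase h₁),
      if_pos (Finset.mem_of_mem_erase h₂), if_pos (Finset.mem_of_mem_erase h₃)] at this
    omega
  obtain ⟨e, he, e', he', hee', heA, he'B⟩ := Finset.exists_mem_ne_notMem_of_not_subset
    (by rw [hcard2 (by simp) hx₃]; norm_num) hEA hEB hAB
  set S₁ := insert e (C₁.erase x)
  set S₂ := insert e' (C₂.erase x)
  refine ⟨({S₁, S₂} : CNF).filter Clause.nontaut,
    (Finset.card_filter_le _ _).trans_lt (Finset.card_le_two.trans_lt (by norm_num)), ?_,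
    fun l => (ldeg_mono (Finset.filter_subset _ _) l).trans <| ldeg_insert_erase_pair_le h12 h13
      h23 (Finset.mem_of_mem_erase he) (Finset.mem_of_mem_erase he') hee' l, fun σ hσ => ?_⟩
  · intro S hS
    obtain ⟨hS, hnt⟩ := Finset.mem_filter.1 hS
    refine ⟨hnt, ?_⟩
    rcases Finset.mem_insert.1 hS with rfl | hS
    · rw [Finset.card_insert_of_notMem heA, hcard2 (by simp) hx₁]
    · rw [Finset.mem_singleton.1 hS, Finset.card_insert_of_notMem he'B, hcard2 (by simp) hx₂]
  · have hsat : ∀ S ∈ ({S₁, S₂} : CNF), satClause σ S := fun S hS => by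
      by_cases hnt : S.nontaut
      · exact hσ S (Finset.mem_filter.2 ⟨hS, hnt⟩)
      · exact satClause_of_not_nontaut_s17 hnt σ
    exact ⟨satClause_mono (Finset.insert_subset (Finset.mem_union_right _ he)
        Finset.subset_union_left) (hsat S₁ (by simp)),
      satClause_mono (Finset.insert_subset (Finset.mem_union_right _ he')
        Finset.subset_union_left) (hsat S₂ (by simp))⟩

lemma ldeg_le_of_KPQ {k p : ℕ} {F : CNF} (hF : KPQ k p p F) (l : Lit) : ldeg F l ≤ p := by
  obtain ⟨v, b⟩ := l
  cases b
  exacts [(hF.2 v).2, (hF.2 v).1]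

lemma vdeg_eq_ldeg_add {F : CNF} (hF : ∀ C ∈ F, C.nontaut) (x : Lit) :
    vdeg F x.1 = ldeg F x + ldeg F x.neg := by
  have hocc : occ F x.1 = F.filter (x ∈ ·) ∪ F.filter (x.neg ∈ ·) := by
    ext C; simp only [mem_occ_iff, Finset.mem_union, Finset.mem_filter, and_or_left]
  rw [vdeg, hocc, Finset.card_union_of_disjoint]
  · rfl
  · exact Finset.disjoint_left.2 fun C hx hnx =>
      hF C (Finset.mem_filter.1 hx).1 x (Finset.mem_filter.1 hx).2 (Finset.mem_filter.1 hnx).2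

lemma false_of_ldeg_eq_two_of_ldeg_neg_eq_one {F : CNF} (hF : KPQ 3 2 2 F)
    (hunsat : ¬ Satisfiable F)
    (hmin : ∀ G : CNF, KPQ 3 2 2 G → ¬ Satisfiable G → F.card ≤ G.card) {x : Lit}
    (h2 : ldeg F x = 2) (h1 : ldeg F x.neg = 1) : False := by
  obtain ⟨C₁, C₂, h12, hP⟩ := Finset.card_eq_two.1 h2
  obtain ⟨C₃, hQ⟩ := Finset.card_eq_one.1 h1
  have hmemP : ∀ C, C ∈ F ∧ x ∈ C ↔ C = C₁ ∨ C = C₂ := fun C => by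
    simpa using Finset.ext_iff.1 hP C
  have hmemQ : ∀ C, C ∈ F ∧ x.neg ∈ C ↔ C = C₃ := fun C => by
    simpa using Finset.ext_iff.1 hQ C
  obtain ⟨hC₁, hx₁⟩ := (hmemP C₁).2 (Or.inl rfl)
  obtain ⟨hC₂, hx₂⟩ := (hmemP C₂).2 (Or.inr rfl)
  obtain ⟨hC₃, hx₃⟩ := (hmemQ C₃).2 rfl
  have h13 : C₁ ≠ C₃ := by rintro rfl; exact (hF.1 C₁ hC₁).1 x hx₁ hx₃
  have h23 : C₂ ≠ C₃ := by rintro rfl; exact (hF.1 C₂ hC₂).1 x hx₂ hx₃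
  have hocc : occ F x.1 = {C₁, C₂, C₃} := by
    ext C
    rw [mem_occ_iff, and_or_left, hmemP, hmemQ]
    simp [or_assoc]
  have hsub : ({C₁, C₂, C₃} : CNF) ⊆ F := hocc ▸ Finset.filter_subset _ _
  obtain ⟨N, hNcard, hNk, hNdeg, hNres⟩ := exists_replacement (isKCNF_mono hsub hF.1)
    h12 h13 h23 hx₁ hx₂ hx₃ fun l => (ldeg_mono hsub l).trans (ldeg_le_of_KPQ hF l)
  refine false_of_replace_occ hF hunsat hmin hNk (hocc ▸ hNdeg)
    (by rwa [hocc, Finset.card_eq_three.2 ⟨C₁, C₂, C₃, h12, h13, h23, rfl⟩]) ?_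
  intro σ hσ C hC hxC D hD hxD
  obtain rfl := (hmemQ D).1 ⟨hD, hxD⟩
  rcases (hmemP C).1 ⟨hC, hxC⟩ with rfl | rfl
  exacts [(hNres σ hσ).1, (hNres σ hσ).2]

lemma sum_vdeg_vars {k : ℕ} {F : CNF} (hF : isKCNF k F) :
    ∑ v ∈ vars F, vdeg F v = k * F.card := by
  let r : ℕ → Clause → Prop := fun v C => (v, true) ∈ C ∨ (v, false) ∈ C
  have hbelow : ∀ C ∈ F, ((vars F).bipartiteBelow r C).card = k := by
    intro C hC
    have himage : (vars F).bipartiteBelow r C = C.image Prod.fst := by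
      ext v
      simp only [Finset.mem_bipartiteBelow, Finset.mem_image, vars, Finset.mem_sup, r]
      constructor
      · rintro ⟨-, h | h⟩
        exacts [⟨_, h, rfl⟩, ⟨_, h, rfl⟩]
      · rintro ⟨⟨w, b⟩, hl, rfl⟩
        exact ⟨⟨C, hC, _, hl, rfl⟩, by cases b <;> simp [hl]⟩
    rw [himage, Finset.card_image_of_injOn, (hF C hC).2]
    intro l hl m hm hlm
    exact (Lit.eq_or_eq_neg_of_fst_eq_s17 hlm).resolve_right fun h => (hF C hC).1 m hm (h ▸ hl)
  calc ∑ v ∈ vars F, vdeg F v = ∑ v ∈ vars F, (F.bipartiteAbove r v).card := rfl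
    _ = ∑ C ∈ F, ((vars F).bipartiteBelow r C).card :=
      Finset.sum_card_bipartiteAbove_eq_sum_card_bipartiteBelow r
    _ = k * F.card := by rw [Finset.sum_congr rfl hbelow, Finset.sum_const, smul_eq_mul, mul_comm]

theorem stmt17 (F : CNF) (hF : KPQ 3 2 2 F) (hunsat : ¬ Satisfiable F)
    (hmin : ∀ G : CNF, KPQ 3 2 2 G → ¬ Satisfiable G → F.card ≤ G.card) :
    (∀ v : ℕ, vdeg F v ≠ 3) ∧ Even F.card := by
  have hdeg : ∀ v, vdeg F v = 0 ∨ vdeg F v = 2 ∨ vdeg F v = 4 := by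
    intro v
    have hv := vdeg_eq_ldeg_add (fun C hC => (hF.1 C hC).1) (v, true)
    have hpure₁ := ldeg_neg_ne_zero hF hunsat hmin (x := (v, true))
    have hpure₂ := ldeg_neg_ne_zero hF hunsat hmin (x := (v, false))
    have hdeg₁ := false_of_ldeg_eq_two_of_ldeg_neg_eq_one hF hunsat hmin (x := (v, true))
    have hdeg₂ := false_of_ldeg_eq_two_of_ldeg_neg_eq_one hF hunsat hmin (x := (v, false))
    simp only [Lit.neg, Bool.not_true, Bool.not_false] at hv hpure₁ hpure₂ hdeg₁ hdeg₂
    have := hF.2 v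
    grind
  refine ⟨fun v => by rcases hdeg v with h | h | h <;> omega, ?_⟩
  have heven : Even (∑ v ∈ vars F, vdeg F v) := Finset.even_sum _ fun v _ => by
    rcases hdeg v with h | h | h <;> rw [h] <;> decide
  rw [sum_vdeg_vars hF.1] at heven
  exact (Nat.even_mul.1 heven).resolve_left (by decide)
end
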